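/- arXiv:math/0610432 — 5 statements merged into one kernel-verified Lean document; each statement's English description precedes it below -/
import Mathlib

section
/- Every first countable countably compact Hausdorff space S is a countably-compactification of each of its dense subspaces: if X is dense in S, then every countably compact closed subset of X is closed in S. -/
def CountablyCompactOn {Z : Type*} [TopologicalSpace Z] (Y : Set Z) : Prop :=
  ∀ U : ℕ → Set Z, (∀ n, IsOpen (U n)) → Y ⊆ ⋃ n, U n →
    ∃ F : Finset ℕ, Y ⊆ ⋃ n ∈ F, U n

/-- Every first countable countably compact Hausdorff space `S` is a
countably-compactification of each of its dense subspaces: if `X` is dense in `S`,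
then every countably compact subset of `X` which is closed in the subspace `X`
is closed in `S`. -/
theorem stmt2 {S : Type*} [TopologicalSpace S] [FirstCountableTopology S] [T2Space S]
    (hS : CountablyCompactOn (Set.univ : Set S))
    (X : Set S) (hX : Dense X)
    (F : Set S) (hFX : F ⊆ X) (hFcc : CountablyCompactOn F)
    (hFcl : ∃ C : Set S, IsClosed C ∧ F = C ∩ X) :
    IsClosed F := by
  rw [← isOpen_compl_iff]
  rw [isOpen_iff_mem_nhds]
  intro x hx
  by_contra hnx
  have hxcl : x ∈ closure F := by
    by_contra h
    exact hnx (Filter.mem_of_superset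
      ((isClosed_closure.isOpen_compl).mem_nhds h)
      (Set.compl_subset_compl.mpr subset_closure))
  obtain ⟨u, huF, hu⟩ := mem_closure_iff_seq_limit.mp hxcl
  -- tails' closures
  set C : ℕ → Set S := fun n => closure (u '' Set.Ici n) with hC
  have hCmem : ∀ n m, n ≤ m → u m ∈ C n := fun n m h =>
    subset_closure ⟨m, h, rfl⟩
  have hy : ∃ y ∈ F, ∀ n, y ∈ C n := by
    by_contra h
    push_neg at h
    obtain ⟨G, hG⟩ := hFcc (fun n => (C n)ᶜ)
      (fun n => isClosed_closure.isOpen_compl)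
      (by intro y hyF; rcases h y hyF with ⟨n, hn⟩; exact Set.mem_iUnion.2 ⟨n, hn⟩)
    set N := G.sup id
    have hmem : u N ∈ ⋃ n ∈ G, (C n)ᶜ := hG (huF N)
    rw [Set.mem_iUnion₂] at hmem
    obtain ⟨n, hnG, hn⟩ := hmem
    exact hn (hCmem n N (Finset.le_sup (f := id) hnG))
  obtain ⟨y, hyF, hyC⟩ := hy
  -- show y = x using Hausdorff
  have hyx : y = x := by
    by_contra hne
    obtain ⟨W, V, hW, hV, hyW, hxV, hdisj⟩ := t2_separation hne
    obtain ⟨N, hN⟩ := (hu.eventually (hV.mem_nhds hxV)).exists_forall_of_atTop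
    have := hyC N
    rw [mem_closure_iff_nhds] at this
    obtain ⟨z, hzW, hz⟩ := this W (hW.mem_nhds hyW)
    obtain ⟨m, hm, rfl⟩ := hz
    exact Set.disjoint_left.mp hdisj hzW (hN m hm)
  exact hx (hyx ▸ hyF)
end

section
/- If Y is a first countable countably compact Hausdorff space containing X as a dense subspace, then Y is a maximal first-countable extension of X, i.e., Y is closed in every first countable Hausdorff space Z containing Y as a subspace. -/
theorem countablyCompactOn_iff_isCountablyCompact {Z : Type*} [TopologicalSpace Z] {A : Set Z} :
    CountablyCompactOn A ↔ IsCountablyCompact A :=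
  isCountablyCompact_iff_countable_open_cover.symm

theorem IsSeqCompact.isSeqClosed {X : Type*} [TopologicalSpace X] [T2Space X] {s : Set X}
    (hs : IsSeqCompact s) : IsSeqClosed s := by
  intro u x hu hux
  obtain ⟨a, ha, φ, hφ, hφa⟩ := hs hu
  rwa [tendsto_nhds_unique (hux.comp hφ.tendsto_atTop) hφa]

theorem IsCountablyCompact.isClosed {X : Type*} [TopologicalSpace X] [FirstCountableTopology X]
    [T2Space X] {s : Set X} (hs : IsCountablyCompact s) : IsClosed s :=
  hs.isSeqCompact.isSeqClosed.isClosed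

theorem stmt3_general {Y : Type} [TopologicalSpace Y]
    (hY : CountablyCompactOn (Set.univ : Set Y)) :
    ∀ (Z : Type) [TopologicalSpace Z] [FirstCountableTopology Z] [T2Space Z]
      (e : Y → Z), Topology.IsEmbedding e → IsClosed (Set.range e) := by
  intro Z _ _ _ e he
  rw [← Set.image_univ]
  exact ((countablyCompactOn_iff_isCountablyCompact.1 hY).image he.continuous).isClosed

/-- If `Y` is a first countable countably compact Hausdorff space containing `X` as a
dense subspace, then `Y` is a maximal first-countable extension of `X`: `Y` is closed
in every first countable Hausdorff space `Z` containing `Y` as a subspace. -/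
theorem stmt3 {Y : Type} [TopologicalSpace Y] [FirstCountableTopology Y] [T2Space Y]
    (hY : CountablyCompactOn (Set.univ : Set Y))
    (X : Set Y) (hX : Dense X) :
    ∀ (Z : Type) [TopologicalSpace Z] [FirstCountableTopology Z] [T2Space Z]
      (e : Y → Z), Topology.IsEmbedding e → IsClosed (Set.range e) :=
  stmt3_general hY
end

section
/- A Ψ-space over a maximal almost disjoint family does not embed as a dense subspace into any first countable countably compact Hausdorff space. -/
/-- `𝒜` is an infinite maximal almost disjoint family of infinite subsets of `ℕ`. -/
def IsMadFamily (𝒜 : Set (Set ℕ)) : Prop :=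
  𝒜.Infinite ∧ (∀ A ∈ 𝒜, A.Infinite) ∧
  (∀ A ∈ 𝒜, ∀ B ∈ 𝒜, A ≠ B → (A ∩ B).Finite) ∧
  (∀ B : Set ℕ, B.Infinite → ∃ A ∈ 𝒜, (A ∩ B).Infinite)

/-- The Ψ-space over `𝒜`: points of `ℕ` are isolated, and basic neighbourhoods of
`x_A` are `{x_A} ∪ (A \ F)` for finite `F`. -/
def psiTopology (𝒜 : Set (Set ℕ)) : TopologicalSpace (ℕ ⊕ ↥𝒜) :=
  TopologicalSpace.generateFrom
    ({S | ∃ n : ℕ, S = {Sum.inl n}} ∪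
     {S | ∃ (A : ↥𝒜) (F : Finset ℕ),
        S = {Sum.inr A} ∪ Sum.inl '' ((A : Set ℕ) \ ↑F)})

lemma psi_nbhd (𝒜 : Set (Set ℕ)) (U : Set (ℕ ⊕ ↥𝒜))
    (hU : TopologicalSpace.GenerateOpen
      ({S | ∃ n : ℕ, S = {Sum.inl n}} ∪
       {S | ∃ (A : ↥𝒜) (F : Finset ℕ),
          S = {Sum.inr A} ∪ Sum.inl '' ((A : Set ℕ) \ ↑F)}) U) (A : ↥𝒜) :
    Sum.inr A ∈ U → ∃ F : Finset ℕ, ∀ k ∈ (A : Set ℕ), k ∉ F → Sum.inl k ∈ U := by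
  induction hU with
  | basic S hS =>
      intro hA
      rcases hS with ⟨n, rfl⟩ | ⟨B, F, rfl⟩
      · simp at hA
      · rcases hA with h | ⟨k, _, h⟩
        · have hAB : A = B := Sum.inr.inj h
          exact ⟨F, fun j hj hjF => Or.inr ⟨j, ⟨hAB ▸ hj, hjF⟩, rfl⟩⟩
        · simp at h
  | univ => exact fun _ => ⟨∅, fun k _ _ => trivial⟩
  | inter s t hs ht ihs iht =>
      intro hA
      obtain ⟨F1, h1⟩ := ihs hA.1
      obtain ⟨F2, h2⟩ := iht hA.2
      exact ⟨F1 ∪ F2, fun k hk hkF =>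
        ⟨h1 k hk (fun h => hkF (Finset.mem_union_left _ h)),
         h2 k hk (fun h => hkF (Finset.mem_union_right _ h))⟩⟩
  | sUnion S hS ih =>
      intro hA
      obtain ⟨t, htS, hAt⟩ := hA
      obtain ⟨F, hF⟩ := ih t htS hAt
      exact ⟨F, fun k hk hkF => ⟨t, htS, hF k hk hkF⟩⟩

lemma exists_seq_forall {P : ℕ → ℕ → Prop} (h : ∀ m p, ∃ n, p < n ∧ P m n) :
    ∃ s : ℕ → ℕ, StrictMono s ∧ ∀ m, P m (s m) := by
  choose f hf hP using h
  refine ⟨fun m => Nat.rec (f 0 0) (fun m ih => f (m+1) ih) m, ?_, ?_⟩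
  · apply strictMono_nat_of_lt_succ
    intro n
    exact hf (n+1) _
  · intro m
    cases m with
    | zero => exact hP 0 0
    | succ m => exact hP (m+1) _

/-- A Ψ-space over a maximal almost disjoint family does not embed as a dense
subspace into any first countable countably compact Hausdorff space. -/
theorem stmt4 (𝒜 : Set (Set ℕ)) (h𝒜 : IsMadFamily 𝒜) :
    ∀ (Y : Type) [TopologicalSpace Y] [FirstCountableTopology Y] [T2Space Y],
      CountablyCompactOn (Set.univ : Set Y) →
      ∀ e : (ℕ ⊕ ↥𝒜) → Y,
        @Topology.IsEmbedding _ _ (psiTopology 𝒜) _ e → ¬ DenseRange e := by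
  intro Y _ _ _ hcc e he _hdense
  letI : TopologicalSpace (ℕ ⊕ ↥𝒜) := psiTopology 𝒜
  obtain ⟨hinf, hAinf, _hadisj, hmad⟩ := h𝒜
  haveI : Infinite ↥𝒜 := Set.infinite_coe_iff.2 hinf
  set f : ℕ → ↥𝒜 := ⇑(Infinite.natEmbedding ↥𝒜) with hfdef
  have hf : Function.Injective f := (Infinite.natEmbedding ↥𝒜).injective
  set a : ℕ → Y := fun n => e (Sum.inr (f n)) with ha
  set C : ℕ → Set Y := fun N => closure (a '' Set.Ici N) with hC
  -- cluster point
  have hcl : ∃ y : Y, ∀ N, y ∈ C N := by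
    by_contra h
    push_neg at h
    have hcov : (Set.univ : Set Y) ⊆ ⋃ N, (C N)ᶜ := by
      intro z _
      obtain ⟨N, hN⟩ := h z
      exact Set.mem_iUnion.2 ⟨N, hN⟩
    obtain ⟨F, hF⟩ := hcc (fun N => (C N)ᶜ) (fun N => isClosed_closure.isOpen_compl) hcov
    have := hF (Set.mem_univ (a (F.sup id)))
    obtain ⟨N, hNF, hNmem⟩ := Set.mem_iUnion₂.1 this
    exact hNmem (subset_closure ⟨F.sup id, Finset.le_sup (f := id) hNF, rfl⟩)
  obtain ⟨y, hy⟩ := hcl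
  -- antitone open basis at y
  obtain ⟨b, hb⟩ := (nhds y).exists_antitone_basis
  set g : ℕ → Set Y := fun m => interior (b m) with hg
  have hgopen : ∀ m, IsOpen (g m) := fun m => isOpen_interior
  have hyg : ∀ m, y ∈ g m := fun m =>
    mem_interior_iff_mem_nhds.2 (hb.toHasBasis.mem_of_mem trivial)
  have hganti : Antitone g := fun i j hij => interior_mono (hb.antitone hij)
  have hgbasis : ∀ U ∈ nhds y, ∃ m, g m ⊆ U := by
    intro U hU
    obtain ⟨m, -, hm⟩ := hb.toHasBasis.mem_iff.1 hU
    exact ⟨m, interior_subset.trans hm⟩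
  -- subsequence
  have hstep : ∀ m p, ∃ n, p < n ∧ a n ∈ g m := by
    intro m p
    obtain ⟨z, hzg, n, hn, rfl⟩ := mem_closure_iff.1 (hy (p+1)) (g m) (hgopen m) (hyg m)
    exact ⟨n, hn, hzg⟩
  obtain ⟨nseq, hns_mono, hns⟩ := exists_seq_forall (P := fun m n => a n ∈ g m) hstep
  -- pick naturals
  have hstep2 : ∀ m p, ∃ kk, p < kk ∧
      kk ∈ (f (nseq m) : Set ℕ) ∧ e (Sum.inl kk) ∈ g m := by
    intro m p
    have hopen : IsOpen (e ⁻¹' g m) := (hgopen m).preimage he.continuous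
    obtain ⟨F, hF⟩ := psi_nbhd 𝒜 _ hopen (f (nseq m)) (hns m)
    have hAi : ((f (nseq m) : Set ℕ)).Infinite := hAinf _ (f (nseq m)).2
    have hdiff : ((f (nseq m) : Set ℕ) \ (↑F ∪ Set.Iic p)).Infinite :=
      hAi.diff ((F.finite_toSet).union (Set.finite_Iic p))
    obtain ⟨kk, hk1, hk2⟩ := hdiff.nonempty
    refine ⟨kk, ?_, hk1, hF kk hk1 (fun h => hk2 (Or.inl h))⟩
    exact lt_of_not_ge (fun h => hk2 (Or.inr h))
  obtain ⟨k, hk_mono, hk⟩ := exists_seq_forall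
    (P := fun m kk => kk ∈ (f (nseq m) : Set ℕ) ∧ e (Sum.inl kk) ∈ g m) hstep2
  -- MAD
  have hBinf : (Set.range k).Infinite := Set.infinite_range_of_injective hk_mono.injective
  obtain ⟨A₀, hA₀mem, hA₀inf⟩ := hmad _ hBinf
  set A' : ↥𝒜 := ⟨A₀, hA₀mem⟩ with hA'
  have hMinf : {m | k m ∈ A₀}.Infinite := by
    intro hfin
    apply hA₀inf
    refine ((hfin.image k).subset ?_)
    rintro x ⟨hx1, m, rfl⟩
    exact ⟨m, hx1, rfl⟩
  -- y ≠ e (Sum.inr A')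
  have hne : y ≠ e (Sum.inr A') := by
    intro heq
    have hSopen : IsOpen ({Sum.inr A'} ∪ Sum.inl '' ((A' : Set ℕ) \ ↑(∅ : Finset ℕ))
        : Set (ℕ ⊕ ↥𝒜)) :=
      TopologicalSpace.GenerateOpen.basic _ (Or.inr ⟨A', ∅, rfl⟩)
    obtain ⟨V, hVopen, hVpre⟩ := he.toIsInducing.isOpen_iff.1 hSopen
    have hyV : y ∈ V := by
      rw [heq]
      have : Sum.inr A' ∈ e ⁻¹' V := by
        rw [hVpre]; exact Or.inl rfl
      exact this
    by_cases hex : ∃ n, f n = A'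
    · obtain ⟨n0, hn0⟩ := hex
      obtain ⟨z, hzV, n, hn, rfl⟩ := mem_closure_iff.1 (hy (n0+1)) V hVopen hyV
      have : Sum.inr (f n) ∈ e ⁻¹' V := hzV
      rw [hVpre] at this
      rcases this with h | ⟨j, _, h⟩
      · have hfn : f n = A' := Sum.inr.inj h
        have hnn0 : n = n0 := hf (hfn.trans hn0.symm)
        have hn' : n0 + 1 ≤ n := hn
        omega
      · simp at h
    · obtain ⟨z, hzV, n, hn, rfl⟩ := mem_closure_iff.1 (hy 0) V hVopen hyV
      have : Sum.inr (f n) ∈ e ⁻¹' V := hzV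
      rw [hVpre] at this
      rcases this with h | ⟨j, _, h⟩
      · exact hex ⟨n, Sum.inr.inj h⟩
      · simp at h
  -- final contradiction via T2
  obtain ⟨W₁, W₂, hW₁, hW₂, hyW₁, heW₂, hdisj⟩ := t2_separation hne
  obtain ⟨m₀, hm₀⟩ := hgbasis W₁ (hW₁.mem_nhds hyW₁)
  have hW₂open : IsOpen (e ⁻¹' W₂) := hW₂.preimage he.continuous
  obtain ⟨F, hF⟩ := psi_nbhd 𝒜 _ hW₂open A' heW₂
  obtain ⟨m, hmA, hmgt⟩ := hMinf.exists_gt (m₀ + F.sup id)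
  have hkm_g : e (Sum.inl (k m)) ∈ g m := (hk m).2
  have h1 : e (Sum.inl (k m)) ∈ W₁ := hm₀ (hganti (by omega) hkm_g)
  have hkmF : k m ∉ F := by
    intro hmem
    have h1 : k m ≤ F.sup id := Finset.le_sup (f := id) hmem
    have h2 : m ≤ k m := hk_mono.le_apply
    omega
  have h2 : e (Sum.inl (k m)) ∈ W₂ := hF (k m) hmA hkmF
  exact Set.disjoint_left.1 hdisj h1 h2
end

section
/- Given a first countable regular Hausdorff space X of cardinality less than min(𝔟, 𝔰) and a countable closed discrete subset A ⊆ X, there is a first countable regular Hausdorff space Y = X ∪ {y} (one new point) containing X as an open dense-in-itself-extending subspace in which A has an accumulation point, and the subspace topology of Y on X equals the topology of X. -/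
noncomputable def boundingNumber : Cardinal :=
  sInf {c | ∃ B : Set (ℕ → ℕ), Cardinal.mk B = c ∧
    ∀ d : ℕ → ℕ, ∃ g ∈ B, {n | d n < g n}.Infinite}

noncomputable def splittingNumber : Cardinal :=
  sInf {c | ∃ S : Set (Set ℕ), Cardinal.mk S = c ∧ (∀ s ∈ S, s.Infinite) ∧
    ∀ B : Set ℕ, B.Infinite → ∃ s ∈ S, (B ∩ s).Infinite ∧ (B \ s).Infinite}

open Set Filter Topology Function

/-!
The new point is glued to `X` along a countably generated filter. Enumerate `A` injectively as
`aₙ`, pick open sets `Gₙ 0 ⊇ Gₙ 1 ⊇ ⋯` around `aₙ` with `closure (Gₙ (j + 1)) ⊆ Gₙ j`, and let the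
neighbourhoods of the new point be generated by the sets `⋃ n ≥ k, Gₙ k`. Hausdorffness and
regularity then reduce to local finiteness of `n ↦ Gₙ 0`, which is where `|X| < 𝔟` enters: each
`x` has a closed neighbourhood `C` missing almost all `aₙ`, hence a rate `φₓ n` with
`U aₙ (φₓ n) ∩ C = ∅` for a neighbourhood basis `U aₙ`, and a single `f` eventually dominating
every `φₓ` makes `n ↦ U aₙ (f n)` locally finite.
-/

theorem exists_finite_lt_of_mk_lt_boundingNumber {ι : Type} (hι : Cardinal.mk ι < boundingNumber)
    (φ : ι → ℕ → ℕ) : ∃ f : ℕ → ℕ, ∀ i, {n | f n < φ i n}.Finite := by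
  by_contra! h
  have hb : boundingNumber ≤ Cardinal.mk (range φ) :=
    csInf_le' ⟨range φ, rfl, fun f => let ⟨i, hi⟩ := h f; ⟨φ i, mem_range_self i, hi⟩⟩
  exact (Cardinal.mk_range_le.trans_lt hι).not_ge hb

section Topology

variable {X : Type*} [TopologicalSpace X]

theorem locallyFinite_singleton_of_isClosed {A : Set X} (hA : IsClosed A) [DiscreteTopology A] :
    LocallyFinite fun x : A => ({(x : X)} : Set X) := by
  intro x
  have hx : Disjoint (𝓝[≠] x) (𝓟 A) :=
    isClosed_and_discrete_iff.1 ⟨hA, isDiscrete_iff_discreteTopology.2 ‹_›⟩ x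
  obtain ⟨t, ht, htA⟩ : ∃ t ∈ 𝓝 x, ∀ y : A, (y : X) ∈ t → (y : X) = x :=
    ⟨_, eventually_nhdsWithin_iff.1 (disjoint_principal_right.1 hx), fun y hy =>
      by_contra fun hne => hy hne y.2⟩
  refine ⟨t, ht, Subsingleton.finite fun y hy z hz => Subtype.ext ?_⟩
  obtain ⟨_, rfl, hy⟩ := hy
  obtain ⟨_, rfl, hz⟩ := hz
  exact (htA y hy).trans (htA z hz).symm

theorem exists_seq_isOpen_closure_subset [RegularSpace X] {z : X} {s : Set X} (hs : s ∈ 𝓝 z) :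
    ∃ G : ℕ → Set X, G 0 ⊆ s ∧ ∀ j, IsOpen (G j) ∧ z ∈ G j ∧ closure (G (j + 1)) ⊆ G j := by
  have : ∀ t : {t : Set X // z ∈ t ∧ IsOpen t}, ∃ t' : {t : Set X // z ∈ t ∧ IsOpen t},
      closure t'.1 ⊆ t.1 := fun t =>
    let ⟨u, hu, hcl⟩ := (hasBasis_opens_closure z).mem_iff.1 (t.2.2.mem_nhds t.2.1)
    ⟨⟨u, hu⟩, hcl⟩
  choose g hg using this
  let t₀ : {t : Set X // z ∈ t ∧ IsOpen t} :=
    ⟨interior s, mem_interior_iff_mem_nhds.2 hs, isOpen_interior⟩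
  refine ⟨fun j => (g^[j] t₀).1, interior_subset, fun j => ⟨(g^[j] t₀).2.2, (g^[j] t₀).2.1, ?_⟩⟩
  simpa only [iterate_succ_apply'] using hg (g^[j] t₀)

end Topology

theorem exists_locallyFinite_of_mk_lt_boundingNumber {X : Type} [TopologicalSpace X]
    [RegularSpace X] (hX : Cardinal.mk X < boundingNumber) {a : ℕ → X}
    (ha : LocallyFinite fun n => ({a n} : Set X)) {U : ℕ → ℕ → Set X}
    (hU : ∀ n, (𝓝 (a n)).HasAntitoneBasis (U n)) :
    ∃ f : ℕ → ℕ, LocallyFinite fun n => U n (f n) := by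
  have hC : ∀ x, ∃ C ∈ 𝓝 x, IsClosed C ∧ {n | a n ∈ C}.Finite := fun x => by
    obtain ⟨t, ht, hfin⟩ := ha x
    obtain ⟨C, hC, hCc, hCt⟩ := exists_mem_nhds_isClosed_subset ht
    exact ⟨C, hC, hCc, hfin.subset fun n hn => ⟨a n, rfl, hCt hn⟩⟩
  choose C hCx hCc hCfin using hC
  have hφ : ∀ x n, ∃ l, a n ∉ C x → U n l ⊆ (C x)ᶜ := fun x n => by
    by_cases hn : a n ∈ C x
    · exact ⟨0, absurd hn⟩
    · obtain ⟨l, -, hl⟩ := (hU n).1.mem_iff.1 ((hCc x).isOpen_compl.mem_nhds hn)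
      exact ⟨l, fun _ => hl⟩
  choose φ hφ using hφ
  obtain ⟨f, hf⟩ := exists_finite_lt_of_mk_lt_boundingNumber hX φ
  refine ⟨f, fun x => ⟨C x, hCx x, ((hCfin x).union (hf x)).subset ?_⟩⟩
  rintro n ⟨y, hyU, hyC⟩
  by_contra hn
  simp only [mem_union, mem_ofPred_eq, not_or, not_lt] at hn
  exact hφ x n hn.1 ((hU n).2 hn.2 hyU) hyC

/-- `Option X` with `none` as the new point, whose neighbourhoods trace `F` on `X`; Mathlib's
`OnePoint X` is the case `F = coclosedCompact X`. -/
def AdjoinPoint {X : Type*} (_F : Filter X) : Type _ := Option X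

namespace AdjoinPoint

variable {X : Type*} {F : Filter X}

def of : X → AdjoinPoint F := Option.some

def pt : AdjoinPoint F := Option.none

theorem forall_iff {p : AdjoinPoint F → Prop} : (∀ y, p y) ↔ p pt ∧ ∀ x, p (of x) :=
  Option.forall

theorem of_injective : Injective (of : X → AdjoinPoint F) :=
  Option.some_injective X

theorem of_ne_pt (x : X) : (of x : AdjoinPoint F) ≠ pt :=
  Option.some_ne_none x

theorem compl_range_of : (range (of : X → AdjoinPoint F))ᶜ = {pt} :=
  compl_range_some X

theorem preimage_of_insert_pt (s : Set X) : of ⁻¹' insert (pt : AdjoinPoint F) (of '' s) = s := by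
  ext x
  simp [of_ne_pt, of_injective.mem_set_image]

theorem compl_image_of (s : Set X) : (of '' s : Set (AdjoinPoint F))ᶜ = insert pt (of '' sᶜ) := by
  ext y
  revert y
  refine forall_iff.2 ⟨?_, fun x => ?_⟩
  · simp [of_ne_pt]
  · simp [of_ne_pt, of_injective.mem_set_image]

variable [TopologicalSpace X]

instance : TopologicalSpace (AdjoinPoint F) where
  IsOpen O := IsOpen (of ⁻¹' O) ∧ (pt ∈ O → of ⁻¹' O ∈ F)
  isOpen_univ := ⟨isOpen_univ, fun _ => univ_mem⟩
  isOpen_inter _ _ hs ht := ⟨hs.1.inter ht.1, fun h => inter_mem (hs.2 h.1) (ht.2 h.2)⟩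
  isOpen_sUnion S hS := by
    refine ⟨?_, fun ⟨s, hs, hpt⟩ => mem_of_superset ((hS s hs).2 hpt) ?_⟩
    · rw [preimage_sUnion]
      exact isOpen_biUnion fun s hs => (hS s hs).1
    · exact preimage_mono (subset_sUnion_of_mem hs)

theorem isOpen_iff {O : Set (AdjoinPoint F)} :
    IsOpen O ↔ IsOpen (of ⁻¹' O) ∧ (pt ∈ O → of ⁻¹' O ∈ F) :=
  Iff.rfl

theorem isOpen_insert_pt {s : Set X} (hs : IsOpen s) (hsF : s ∈ F) :
    IsOpen (insert pt (of '' s) : Set (AdjoinPoint F)) := by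
  rw [isOpen_iff, preimage_of_insert_pt]
  exact ⟨hs, fun _ => hsF⟩

theorem isOpenMap_of : IsOpenMap (of : X → AdjoinPoint F) := fun s hs =>
  ⟨by rwa [of_injective.preimage_image], fun ⟨x, _, hx⟩ => (of_ne_pt x hx).elim⟩

theorem isClosed_image_of {C : Set X} (hC : IsClosed C) (hCF : Cᶜ ∈ F) :
    IsClosed (of '' C : Set (AdjoinPoint F)) := by
  rw [← isOpen_compl_iff, compl_image_of]
  exact isOpen_insert_pt hC.isOpen_compl hCF

theorem isClosed_insert_pt {C : Set X} (hC : IsClosed C) :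
    IsClosed (insert pt (of '' C) : Set (AdjoinPoint F)) := by
  rw [← compl_compl C, ← compl_image_of, isClosed_compl_iff]
  exact isOpenMap_of _ hC.isOpen_compl

theorem isOpenEmbedding_of : IsOpenEmbedding (of : X → AdjoinPoint F) :=
  .of_continuous_injective_isOpenMap (continuous_def.2 fun _ hO => hO.1) of_injective isOpenMap_of

theorem nhds_of (x : X) : 𝓝 (of x : AdjoinPoint F) = map of (𝓝 x) :=
  (isOpenEmbedding_of.map_nhds_eq x).symm

theorem map_of_le_nhds_pt : map of F ≤ 𝓝 (pt : AdjoinPoint F) := fun s hs => by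
  obtain ⟨O, hOs, hO, hpt⟩ := mem_nhds_iff.1 hs
  exact mem_of_superset (hO.2 hpt) (preimage_mono hOs)

theorem nhds_pt (hF : ∀ s ∈ F, interior s ∈ F) : 𝓝 (pt : AdjoinPoint F) = pure pt ⊔ map of F := by
  refine le_antisymm (fun s ⟨hpt, hs⟩ => ?_) (sup_le (pure_le_nhds pt) map_of_le_nhds_pt)
  refine mem_of_superset ((isOpen_insert_pt isOpen_interior (hF _ hs)).mem_nhds (mem_insert _ _)) ?_
  exact insert_subset hpt (image_subset_iff.2 interior_subset)

theorem firstCountableTopology [FirstCountableTopology X] [F.IsCountablyGenerated]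
    (hF : ∀ s ∈ F, interior s ∈ F) : FirstCountableTopology (AdjoinPoint F) := by
  refine ⟨forall_iff.2 ⟨?_, fun x => ?_⟩⟩
  · rw [nhds_pt hF]
    infer_instance
  · rw [nhds_of]
    infer_instance

theorem disjoint_nhds_of_nhds_pt (hF : ∀ s ∈ F, interior s ∈ F) {x : X}
    (hx : Disjoint (𝓝 x) F) : Disjoint (𝓝 (of x)) (𝓝 (pt : AdjoinPoint F)) := by
  rw [nhds_of, nhds_pt hF, disjoint_sup_right, disjoint_map of_injective]
  refine ⟨disjoint_of_disjoint_of_mem (t := {pt}) ?_ range_mem_map (mem_pure.2 rfl), hx⟩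
  rw [← compl_range_of]
  exact disjoint_compl_right

theorem t2Space [T2Space X] (hF : ∀ s ∈ F, interior s ∈ F) (hdisj : ∀ x, Disjoint (𝓝 x) F) :
    T2Space (AdjoinPoint F) := by
  refine t2Space_iff_disjoint_nhds.2 ?_
  rintro (_ | x) (_ | x') hne
  · exact (hne rfl).elim
  · exact (disjoint_nhds_of_nhds_pt hF (hdisj x')).symm
  · exact disjoint_nhds_of_nhds_pt hF (hdisj x)
  · change Disjoint (𝓝 (of x)) (𝓝 (of x'))
    rw [nhds_of, nhds_of, disjoint_map of_injective]
    exact disjoint_nhds_nhds.2 fun h => hne (congrArg of h)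

theorem regularSpace [RegularSpace X] (hF : ∀ s ∈ F, interior s ∈ F)
    (hdisj : ∀ x, Disjoint (𝓝 x) F) (hcl : ∀ s ∈ F, ∃ t ∈ F, closure t ⊆ s) :
    RegularSpace (AdjoinPoint F) := by
  refine .of_exists_mem_nhds_isClosed_subset (forall_iff.2 ⟨fun s hs => ?_, fun x s hs => ?_⟩)
  · rw [nhds_pt hF] at hs
    obtain ⟨t, ht, hts⟩ := hcl _ hs.2
    refine ⟨insert pt (of '' closure t), ?_, isClosed_insert_pt isClosed_closure,
      insert_subset hs.1 (image_subset_iff.2 hts)⟩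
    rw [nhds_pt hF]
    refine ⟨mem_insert _ _, ?_⟩
    change of ⁻¹' _ ∈ F
    rw [preimage_of_insert_pt]
    exact mem_of_superset ht subset_closure
  · rw [nhds_of] at hs ⊢
    obtain ⟨u, hu, v, hv, huv⟩ := Filter.disjoint_iff.1 (hdisj x)
    obtain ⟨C, hC, hCc, hCs⟩ := exists_mem_nhds_isClosed_subset (inter_mem hs hu)
    exact ⟨of '' C, image_mem_map hC,
      isClosed_image_of hCc (mem_of_superset hv fun y hy hyC => huv.ne_of_mem (hCs hyC).2 hy rfl),
      image_subset_iff.2 fun y hy => (hCs hy).1⟩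

theorem dense_range_of [F.NeBot] : Dense (range (of : X → AdjoinPoint F)) := by
  refine forall_iff.2 ⟨?_, fun x => subset_closure (mem_range_self x)⟩
  refine mem_closure_iff_clusterPt.2 (NeBot.mono (map_neBot (m := of)) (le_inf map_of_le_nhds_pt ?_))
  exact le_principal_iff.2 (range_mem_map)

theorem accPt_pt {A : Set X} (hA : (F ⊓ 𝓟 A).NeBot) : AccPt (pt : AdjoinPoint F) (𝓟 (of '' A)) := by
  refine (hA.map of).mono (le_inf (le_inf ((map_mono inf_le_left).trans map_of_le_nhds_pt) ?_) ?_)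
  · exact le_principal_iff.2 (mem_map.2 (univ_mem' fun y => of_ne_pt y))
  · rw [← map_principal]
    exact map_mono inf_le_right

end AdjoinPoint

section TailFilter

variable {X : Type*} (G : ℕ → ℕ → Set X)

def tailSet (k : ℕ) : Set X := ⋃ n, G (n + k) k

def tailFilter : Filter X := ⨅ k, 𝓟 (tailSet G k)

instance : (tailFilter G).IsCountablyGenerated :=
  Filter.iInf.isCountablyGenerated _

variable {G}

theorem subset_tailSet (hG : ∀ n, Antitone (G n)) {n j k : ℕ} (hn : k ≤ n) (hj : k ≤ j) :
    G n j ⊆ tailSet G k := fun _ hx =>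
  mem_iUnion.2 ⟨n - k, by rw [Nat.sub_add_cancel hn]; exact hG n hj hx⟩

theorem tailFilter_hasAntitoneBasis (hG : ∀ n, Antitone (G n)) :
    (tailFilter G).HasAntitoneBasis (tailSet G) :=
  .iInf_principal <| antitone_nat_of_succ_le fun k =>
    iUnion_subset fun _ => subset_tailSet hG (by omega) k.le_succ

theorem tailFilter_inf_principal_neBot (hG : ∀ n, Antitone (G n)) {A : Set X}
    (hA : ∀ n j, (G n j ∩ A).Nonempty) : (tailFilter G ⊓ 𝓟 A).NeBot :=
  (tailFilter_hasAntitoneBasis hG).1.inf_principal_neBot_iff.2 fun k _ =>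
    (hA k k).mono (inter_subset_inter_left _ (subset_tailSet hG le_rfl le_rfl))

variable [TopologicalSpace X]

theorem antitone_of_closure_succ_subset {s : ℕ → Set X} (h : ∀ j, closure (s (j + 1)) ⊆ s j) :
    Antitone s :=
  antitone_nat_of_succ_le fun j => subset_closure.trans (h j)

theorem interior_mem_tailFilter (hG : ∀ n, Antitone (G n)) (hGo : ∀ n j, IsOpen (G n j))
    {s : Set X} (hs : s ∈ tailFilter G) : interior s ∈ tailFilter G := by
  obtain ⟨k, -, hk⟩ := (tailFilter_hasAntitoneBasis hG).1.mem_iff.1 hs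
  exact mem_of_superset ((tailFilter_hasAntitoneBasis hG).mem k)
    (interior_maximal hk (isOpen_iUnion fun _ => hGo _ _))

theorem closure_tailSet_succ_subset (hG : ∀ n j, closure (G n (j + 1)) ⊆ G n j)
    (hlf : LocallyFinite fun n => G n 0) (k : ℕ) : closure (tailSet G (k + 1)) ⊆ tailSet G k := by
  have hanti n := antitone_of_closure_succ_subset (hG n)
  have hlf' : LocallyFinite fun n => G (n + (k + 1)) (k + 1) :=
    (hlf.comp_injective (add_left_injective _)).subset fun _ => hanti _ (Nat.zero_le _)
  rw [tailSet, hlf'.closure_iUnion]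
  exact iUnion_subset fun _ => (hG _ k).trans (subset_tailSet hanti (by omega) le_rfl)

theorem exists_closure_subset_of_mem_tailFilter (hG : ∀ n j, closure (G n (j + 1)) ⊆ G n j)
    (hlf : LocallyFinite fun n => G n 0) {s : Set X} (hs : s ∈ tailFilter G) :
    ∃ t ∈ tailFilter G, closure t ⊆ s := by
  have hbasis := tailFilter_hasAntitoneBasis fun n => antitone_of_closure_succ_subset (hG n)
  obtain ⟨k, -, hk⟩ := hbasis.1.mem_iff.1 hs
  exact ⟨_, hbasis.mem (k + 1), (closure_tailSet_succ_subset hG hlf k).trans hk⟩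

theorem disjoint_nhds_tailFilter (hG : ∀ n, Antitone (G n)) (hlf : LocallyFinite fun n => G n 0)
    (x : X) : Disjoint (𝓝 x) (tailFilter G) := by
  obtain ⟨t, ht, hfin⟩ := hlf x
  obtain ⟨K, hK⟩ := hfin.bddAbove
  refine disjoint_of_disjoint_of_mem ?_ ht ((tailFilter_hasAntitoneBasis hG).mem (K + 1))
  refine disjoint_iUnion_right.2 fun n => disjoint_left.2 fun y hyt hyG => ?_
  have : n + (K + 1) ≤ K := hK ⟨y, hG _ (Nat.zero_le _) hyG, hyt⟩
  omega

end TailFilter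

open AdjoinPoint in
theorem stmt11_general (X : Type) [TopologicalSpace X] [FirstCountableTopology X]
    [RegularSpace X] [T2Space X]
    (hcard : Cardinal.mk X < min boundingNumber splittingNumber)
    (A : Set X) (hAi : A.Infinite)
    (hAcl : IsClosed A) (hAdisc : DiscreteTopology ↥A) :
    ∃ (Y : Type) (tY : TopologicalSpace Y),
      @FirstCountableTopology Y tY ∧ @RegularSpace Y tY ∧ @T2Space Y tY ∧
      ∃ e : X → Y,
        @Topology.IsEmbedding _ _ _ tY e ∧
        @IsOpen Y tY (Set.range e) ∧
        @Dense Y tY (Set.range e) ∧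
        (∃ y : Y, (Set.range e)ᶜ = {y}) ∧
        ∃ y : Y, @AccPt Y tY y (Filter.principal (e '' A)) := by
  let a : ℕ → X := fun n => hAi.natEmbedding _ n
  have ha : LocallyFinite fun n => ({a n} : Set X) :=
    (locallyFinite_singleton_of_isClosed hAcl).comp_injective (hAi.natEmbedding _).injective
  choose U hU using fun n => (𝓝 (a n)).exists_antitone_basis
  obtain ⟨f, hf⟩ :=
    exists_locallyFinite_of_mk_lt_boundingNumber (hcard.trans_le (min_le_left _ _)) ha hU
  choose G hGU hG using fun n => exists_seq_isOpen_closure_subset ((hU n).mem (f n))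
  have hGcl n j : closure (G n (j + 1)) ⊆ G n j := (hG n j).2.2
  have hanti n := antitone_of_closure_succ_subset (hGcl n)
  have hlf : LocallyFinite fun n => G n 0 := hf.subset hGU
  have hint s (hs : s ∈ tailFilter G) := interior_mem_tailFilter hanti (fun n j => (hG n j).1) hs
  have hdisj := disjoint_nhds_tailFilter hanti hlf
  have hA : (tailFilter G ⊓ 𝓟 A).NeBot :=
    tailFilter_inf_principal_neBot hanti fun n j => ⟨a n, (hG n j).2.1, (hAi.natEmbedding _ n).2⟩
  have : (tailFilter G).NeBot := hA.mono inf_le_left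
  exact ⟨AdjoinPoint (tailFilter G), inferInstance, firstCountableTopology hint,
    regularSpace hint hdisj fun _ => exists_closure_subset_of_mem_tailFilter hGcl hlf,
    t2Space hint hdisj, of, isOpenEmbedding_of.isEmbedding, isOpenEmbedding_of.isOpen_range,
    dense_range_of, ⟨pt, compl_range_of⟩, pt, accPt_pt hA⟩

/-- Given a first countable regular Hausdorff space `X` with `|X| < min(𝔟,𝔰)` and a
countably infinite closed discrete `A ⊆ X`, there is a first countable regular
Hausdorff space `Y` obtained by adding one new point, containing `X` as an open
dense subspace (with its original topology as subspace topology), in which `A`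
has an accumulation point. -/
theorem stmt11 (X : Type) [TopologicalSpace X] [FirstCountableTopology X]
    [RegularSpace X] [T2Space X]
    (hcard : Cardinal.mk X < min boundingNumber splittingNumber)
    (A : Set X) (hAc : A.Countable) (hAi : A.Infinite)
    (hAcl : IsClosed A) (hAdisc : DiscreteTopology ↥A) :
    ∃ (Y : Type) (tY : TopologicalSpace Y),
      @FirstCountableTopology Y tY ∧ @RegularSpace Y tY ∧ @T2Space Y tY ∧
      ∃ e : X → Y,
        @Topology.IsEmbedding _ _ _ tY e ∧
        @IsOpen Y tY (Set.range e) ∧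
        @Dense Y tY (Set.range e) ∧
        (∃ y : Y, (Set.range e)ᶜ = {y}) ∧
        ∃ y : Y, @AccPt Y tY y (Filter.principal (e '' A)) :=
  stmt11_general X hcard A hAi hAcl hAdisc
end

section
/- In a first countable regular space, if D and E are countable closed discrete sets with finite intersection, then there exist neighborhoods U_i of the points of D \ E and V_j of the points of E \ D such that ∪U_i and ∪V_j are disjoint. -/
/-- In a first countable regular Hausdorff space, if `D` and `E` are injectively
enumerated countable closed discrete sets with finite intersection, then for some
`ℓ` there are open neighbourhoods `U i ∋ D i` and `V j ∋ E j` (for `i, j ≥ ℓ`)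
such that `⋃_{i≥ℓ} U i` and `⋃_{j≥ℓ} V j` are disjoint. -/
theorem stmt18 {X : Type*} [TopologicalSpace X] [FirstCountableTopology X]
    [RegularSpace X] [T2Space X]
    (D E : ℕ → X) (hDinj : Function.Injective D) (hEinj : Function.Injective E)
    (hDcl : IsClosed (Set.range D)) (hDdisc : DiscreteTopology ↥(Set.range D))
    (hEcl : IsClosed (Set.range E)) (hEdisc : DiscreteTopology ↥(Set.range E))
    (hfin : (Set.range D ∩ Set.range E).Finite) :
    ∃ (ℓ : ℕ) (U V : ℕ → Set X),
      (∀ i ≥ ℓ, IsOpen (U i) ∧ D i ∈ U i ∧ IsOpen (V i) ∧ E i ∈ V i) ∧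
      (⋃ i ∈ {i | ℓ ≤ i}, U i) ∩ (⋃ j ∈ {j | ℓ ≤ j}, V j) = ∅ := by
  -- the sets of "bad" indices are finite
  have hSD : {i : ℕ | D i ∈ Set.range E}.Finite := by
    have hsub : {i : ℕ | D i ∈ Set.range E} ⊆ D ⁻¹' (Set.range D ∩ Set.range E) :=
      fun i hi => ⟨Set.mem_range_self i, hi⟩
    exact (hfin.preimage (hDinj.injOn)).subset hsub
  have hSE : {j : ℕ | E j ∈ Set.range D}.Finite := by
    have hsub : {j : ℕ | E j ∈ Set.range D} ⊆ E ⁻¹' (Set.range D ∩ Set.range E) :=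
      fun j hj => ⟨hj, Set.mem_range_self j⟩
    exact (hfin.preimage (hEinj.injOn)).subset hsub
  obtain ⟨ℓ, hℓ⟩ : ∃ ℓ : ℕ, ∀ i, ℓ ≤ i → D i ∉ Set.range E ∧ E i ∉ Set.range D := by
    obtain ⟨n, hn⟩ := (hSD.union hSE).bddAbove
    refine ⟨n + 1, fun i hi => ⟨fun h => ?_, fun h => ?_⟩⟩
    · exact absurd (hn (Set.mem_union_left _ h)) (by omega)
    · exact absurd (hn (Set.mem_union_right _ h)) (by omega)
  -- regularity: separate a point from a closed set by an open set with disjoint closure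
  have key : ∀ (x : X) (s : Set X), IsClosed s → x ∉ s →
      ∃ u : Set X, IsOpen u ∧ x ∈ u ∧ Disjoint (closure u) s := by
    intro x s hs hx
    rcases exists_mem_nhds_isClosed_subset (hs.isOpen_compl.mem_nhds hx) with ⟨t, ht, htc, hts⟩
    refine ⟨interior t, isOpen_interior, mem_interior_iff_mem_nhds.2 ht, ?_⟩
    have hcl : closure (interior t) ⊆ sᶜ :=
      (htc.closure_subset_iff.2 interior_subset).trans hts
    exact disjoint_compl_left.mono_left hcl
  have hU' : ∀ i : ℕ, ∃ u : Set X, IsOpen u ∧ (ℓ ≤ i → D i ∈ u) ∧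
      Disjoint (closure u) (Set.range E) := by
    intro i
    by_cases h : ℓ ≤ i
    · obtain ⟨u, h1, h2, h3⟩ := key (D i) _ hEcl (hℓ i h).1
      exact ⟨u, h1, fun _ => h2, h3⟩
    · exact ⟨∅, isOpen_empty, fun h' => absurd h' h, by simp⟩
  have hV' : ∀ j : ℕ, ∃ v : Set X, IsOpen v ∧ (ℓ ≤ j → E j ∈ v) ∧
      Disjoint (closure v) (Set.range D) := by
    intro j
    by_cases h : ℓ ≤ j
    · obtain ⟨v, h1, h2, h3⟩ := key (E j) _ hDcl (hℓ j h).2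
      exact ⟨v, h1, fun _ => h2, h3⟩
    · exact ⟨∅, isOpen_empty, fun h' => absurd h' h, by simp⟩
  choose U0 hU0o hU0m hU0d using hU'
  choose V0 hV0o hV0m hV0d using hV'
  refine ⟨ℓ, fun i => U0 i \ ⋃ j ∈ Finset.range (i + 1), closure (V0 j),
    fun j => V0 j \ ⋃ i ∈ Finset.range (j + 1), closure (U0 i), ?_, ?_⟩
  · intro i hi
    have hclU : IsClosed (⋃ j ∈ Finset.range (i + 1), closure (V0 j)) :=
      (Finset.range (i + 1)).finite_toSet.isClosed_biUnion (fun j _ => isClosed_closure)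
    have hclV : IsClosed (⋃ k ∈ Finset.range (i + 1), closure (U0 k)) :=
      (Finset.range (i + 1)).finite_toSet.isClosed_biUnion (fun j _ => isClosed_closure)
    refine ⟨(hU0o i).sdiff hclU, ⟨hU0m i hi, ?_⟩, (hV0o i).sdiff hclV, ⟨hV0m i hi, ?_⟩⟩
    · simp only [Set.mem_iUnion, not_exists]
      intro j _
      exact fun hx => Set.disjoint_left.1 (hV0d j) hx ⟨i, rfl⟩
    · simp only [Set.mem_iUnion, not_exists]
      intro k _
      exact fun hx => Set.disjoint_left.1 (hU0d k) hx ⟨i, rfl⟩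
  · ext x
    simp only [Set.mem_inter_iff, Set.mem_iUnion, Set.mem_setOf_eq, Set.mem_empty_iff_false,
      iff_false, not_and, not_exists]
    rintro ⟨i, hi, hxU, hxU'⟩ j hj ⟨hxV, hxV'⟩
    rcases le_total i j with hij | hij
    · exact hxV' (Set.mem_biUnion (Finset.mem_range.2 (by omega)) (subset_closure hxU))
    · exact hxU' (Set.mem_biUnion (Finset.mem_range.2 (by omega)) (subset_closure hxV))
end
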